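/- Let (V, ⟨·,·⟩, J, A) be a complex model such that A satisfies the Gray identity: A(x,y,z,w) + A(Jx,Jy,Jz,Jw) = A(Jx,Jy,z,w) + A(x,y,Jz,Jw) + A(Jx,y,Jz,w) + A(x,Jy,z,Jw) + A(Jx,y,z,Jw) + A(x,Jy,Jz,w) for all x,y,z,w ∈ V. If the complex Jacobi operator of A vanishes for every complex line, i.e. A(y,x,x,z) + A(y,Jx,Jx,z) = 0 for all x,y,z ∈ V, then A = 0. Equivalently, the same conclusion holds if instead the complex curvature operator vanishes for every complex line, i.e. A(x,Jx,z,w) = 0 for all x,z,w ∈ V. -/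

import Mathlib

open scoped RealInnerProductSpace

/-!
Write `Jᵢ` for `J` acting on the `i`-th argument of `A`; these operators commute and square to `-1`,
and Gray's identity reads `(1 - J₁J₂)(1 - J₁J₃)(1 - J₁J₄) A = 0`.

If the complex curvature operator vanishes, polarisation gives `J₁A = J₂A`, and Gray's identity
then forces `A(x, Jy, Jz, w) = A(x, y, z, w)`. With this, the Bianchi identity makes `A`
symmetric in its two middle arguments, and a curvature tensor with that symmetry is zero.

If the complex Jacobi operator vanishes, the symmetrisation of `A` in its middle arguments is
anti-invariant under `J₂J₃`. Since a curvature tensor is recovered from that symmetrisation, this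
gives `(1 - J₁J₂)(1 + J₁J₃) A = 0`, and together with Gray's identity `A` is Kähler:
`J₁J₂A = A`. For a Kähler tensor the Jacobi condition says that the holomorphic bisectional
curvature `A(x, Jx, y, Jy)` vanishes, so the complex curvature operator vanishes too, which is
the case above.
-/

structure IsAlgebraicCurvatureTensor {V : Type*} [AddCommGroup V] [Module ℝ V]
    (A : V →ₗ[ℝ] V →ₗ[ℝ] V →ₗ[ℝ] V →ₗ[ℝ] ℝ) : Prop where
  antisymm : ∀ x y z w, A x y z w = - A y x z w
  pair_symm : ∀ x y z w, A x y z w = A z w x y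
  bianchi : ∀ x y z w, A x y z w + A y z x w + A z x y w = 0

section ComplexModel

variable {V : Type*} [AddCommGroup V] [Module ℝ V] (J : V →ₗ[ℝ] V)
  (A : V →ₗ[ℝ] V →ₗ[ℝ] V →ₗ[ℝ] V →ₗ[ℝ] ℝ)

def GrayIdentity : Prop :=
  ∀ x y z w, A x y z w + A (J x) (J y) (J z) (J w)
    = A (J x) (J y) z w + A x y (J z) (J w) + A (J x) y (J z) w
      + A x (J y) z (J w) + A (J x) y z (J w) + A x (J y) (J z) w

def ComplexJacobiVanishes : Prop :=
  ∀ x y z, A y x x z + A y (J x) (J x) z = 0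

def ComplexCurvatureOperatorVanishes : Prop :=
  ∀ x z w, A x (J x) z w = 0

end ComplexModel

namespace IsAlgebraicCurvatureTensor

variable {V : Type*} [AddCommGroup V] [Module ℝ V] {A : V →ₗ[ℝ] V →ₗ[ℝ] V →ₗ[ℝ] V →ₗ[ℝ] ℝ}
  {J : V →ₗ[ℝ] V}

theorem antisymm_right (hA : IsAlgebraicCurvatureTensor A) (x y z w : V) :
    A x y z w = - A x y w z := by
  rw [hA.pair_symm, hA.antisymm, hA.pair_symm w]

theorem three_mul_apply_eq_middle_symm_sub (hA : IsAlgebraicCurvatureTensor A) (x y z w : V) :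
    3 * A x y z w = (A x y z w + A x z y w) - (A y x z w + A y z x w) := by
  linear_combination hA.bianchi x y z w + hA.antisymm y x z w - hA.antisymm z x y w

theorem eq_zero_of_symm_middle (hA : IsAlgebraicCurvatureTensor A)
    (h : ∀ x y z w, A x y z w = A x z y w) : A = 0 := by
  ext x y z w
  simp only [LinearMap.zero_apply]
  linear_combination -hA.three_mul_apply_eq_middle_symm_sub x y z w + h x y z w - h y x z w
    + 2 * hA.antisymm y x z w

theorem apply_J_left_eq_of_complexCurvatureOperatorVanishes (hA : IsAlgebraicCurvatureTensor A)
    (h : ComplexCurvatureOperatorVanishes J A) (x y z w : V) :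
    A (J x) y z w = A x (J y) z w := by
  have hxy := h (x + y) z w
  simp only [map_add, LinearMap.add_apply, h x, h y] at hxy
  linear_combination -hxy + hA.antisymm y (J x) z w

theorem apply_J_right_eq_of_apply_J_left_eq (hA : IsAlgebraicCurvatureTensor A)
    (hJA : ∀ x y z w, A (J x) y z w = A x (J y) z w) (x y z w : V) :
    A x y (J z) w = A x y z (J w) := by
  rw [hA.pair_symm, hJA, ← hA.pair_symm]

theorem apply_J_middle_eq_of_apply_J_left_eq (hA : IsAlgebraicCurvatureTensor A)
    (hJ : ∀ x, J (J x) = -x) (hG : GrayIdentity J A)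
    (hJA : ∀ x y z w, A (J x) y z w = A x (J y) z w) (x y z w : V) :
    A x (J y) (J z) w = A x y z w := by
  have hJA' := hA.apply_J_right_eq_of_apply_J_left_eq hJA
  have h12 := hJA x (J y) z w
  have h34 := hJA' x y z (J w)
  have h1234 := hJA x (J y) (J z) (J w)
  simp only [hJ, map_neg, LinearMap.neg_apply] at h12 h34 h1234
  linear_combination (-1/4 : ℝ) * (hG x y z w - h1234 + h12 + 2 * h34 + hJA x y (J z) w
    + hJA x y z (J w) - 2 * hJA' x (J y) z w)

theorem eq_zero_of_complexCurvatureOperatorVanishes (hA : IsAlgebraicCurvatureTensor A)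
    (hJ : ∀ x, J (J x) = -x) (hG : GrayIdentity J A)
    (h : ComplexCurvatureOperatorVanishes J A) : A = 0 := by
  have hJA := hA.apply_J_left_eq_of_complexCurvatureOperatorVanishes h
  have hJJ := hA.apply_J_middle_eq_of_apply_J_left_eq hJ hG hJA
  have hJself : ∀ x z w, A z (J x) x w = 0 := fun x z w => by
    have hJJx := hJJ z (J x) x w
    simp only [hJ, map_neg, LinearMap.neg_apply] at hJJx
    linear_combination (-1/2 : ℝ) * (hA.bianchi x (J x) z w - h x z w
      - hA.antisymm (J x) z x w + hJJx)
  refine hA.eq_zero_of_symm_middle fun z a b w => ?_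
  have hab := hJself (J a + b) z w
  have ha := hJself (J a) z w
  simp only [map_add, LinearMap.add_apply, hJ, map_neg, LinearMap.neg_apply, hJself b z w] at hab ha
  linear_combination ha - hab + hJJ z b a w

theorem _root_.ComplexJacobiVanishes.polarized (h : ComplexJacobiVanishes J A) (x y z w : V) :
    A x y z w + A x z y w + A x (J y) (J z) w + A x (J z) (J y) w = 0 := by
  have hyz := h (y + z) x w
  simp only [map_add, LinearMap.add_apply] at hyz
  linear_combination hyz - h y x w - h z x w

-- In the notation of the header this is `(1 - J₁J₂)(1 + J₁J₃) A = 0`.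
theorem apply_J_J_left_sub_apply_eq_of_complexJacobiVanishes (hA : IsAlgebraicCurvatureTensor A)
    (hJ : ∀ x, J (J x) = -x) (h : ComplexJacobiVanishes J A) (x y z w : V) :
    A (J x) (J y) z w - A x y z w = A (J x) y (J z) w + A x (J y) (J z) w := by
  have hP := h.polarized
  have hPJ := hP (J x) (J y) z w
  have hPJ' := hP (J y) (J x) z w
  simp only [hJ, map_neg, LinearMap.neg_apply] at hPJ hPJ'
  linear_combination (-1/3 : ℝ) * (hA.three_mul_apply_eq_middle_symm_sub x y z w
    - hA.three_mul_apply_eq_middle_symm_sub (J x) (J y) z w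
    + hA.three_mul_apply_eq_middle_symm_sub (J x) y (J z) w
    + hA.three_mul_apply_eq_middle_symm_sub x (J y) (J z) w
    + hP x y z w - hP y x z w - hPJ + hPJ')

theorem apply_J_J_left_of_complexJacobiVanishes (hA : IsAlgebraicCurvatureTensor A)
    (hJ : ∀ x, J (J x) = -x) (hG : GrayIdentity J A) (h : ComplexJacobiVanishes J A)
    (x y z w : V) : A (J x) (J y) z w = A x y z w := by
  have hD := hA.apply_J_J_left_sub_apply_eq_of_complexJacobiVanishes hJ h
  have hD' : ∀ x y z w,
      A (J x) (J y) z w - A x y z w = A (J x) y z (J w) + A x (J y) z (J w) := by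
    intro x y z w
    linear_combination -hD x y w z - hA.antisymm_right x y z w
      + hA.antisymm_right (J x) (J y) z w - hA.antisymm_right (J x) y z (J w)
      - hA.antisymm_right x (J y) z (J w)
  -- `4(1 - J₁J₂)` is Gray's operator plus `2(1 - J₁J₂)(1 + J₁J₃)` plus
  -- `(1 - J₁J₃)(1 - J₁J₂)(1 + J₁J₄)`, and `(1 - J₁J₂)J₁ = (1 - J₁J₂)J₂` lets `J₁J₃` act as `J₂J₃`.
  have hDJ := hD' x (J y) (J z) w
  simp only [hJ, map_neg, LinearMap.neg_apply] at hDJ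
  linear_combination (-1/4 : ℝ) * (hG x y z w - 2 * hD x y z w - hD' x y z w + hDJ)

theorem complexCurvatureOperatorVanishes_of_kaehler (hA : IsAlgebraicCurvatureTensor A)
    (hJ : ∀ x, J (J x) = -x) (hK : ∀ x y z w, A (J x) (J y) z w = A x y z w)
    (h : ComplexJacobiVanishes J A) : ComplexCurvatureOperatorVanishes J A := by
  intro x z w
  have hK' : ∀ x y z w, A x y (J z) (J w) = A x y z w := fun x y z w => by
    rw [hA.pair_symm, hK, hA.pair_symm]
  have hbisect : ∀ y, A x (J x) y (J y) = 0 := fun y => by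
    have h₁ := hK y (J x) x (J y)
    have h₂ := hK y (J x) (J x) y
    have h₃ := hK' (J y) x x (J y)
    simp only [hJ, map_neg, LinearMap.neg_apply] at h₁ h₂ h₃
    linear_combination hA.bianchi x (J x) y (J y) - hA.antisymm (J x) y x (J y) - hK' y x x y
      - h₁ - h x y y - h₂ + h₃
  have hzw := hbisect (z + J w)
  have hw := hbisect (J w)
  simp only [map_add, LinearMap.add_apply, hbisect z, hJ, map_neg] at hzw hw
  linear_combination (-1/2 : ℝ) * (hzw - hw - hK' x (J x) w z - hA.antisymm_right x (J x) w z)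

end IsAlgebraicCurvatureTensor

theorem gray_identity_and_vanishing_complex_operator_implies_flat_general
    {V : Type*} [NormedAddCommGroup V] [InnerProductSpace ℝ V]
    (J : V →ₗ[ℝ] V) (hJ : ∀ x, J (J x) = -x)
    (A : V →ₗ[ℝ] V →ₗ[ℝ] V →ₗ[ℝ] V →ₗ[ℝ] ℝ)
    (hAanti : ∀ x y z w : V, A x y z w = - A y x z w)
    (hApair : ∀ x y z w : V, A x y z w = A z w x y)
    (hAbianchi : ∀ x y z w : V, A x y z w + A y z x w + A z x y w = 0)
    (hGray : ∀ x y z w : V,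
      A x y z w + A (J x) (J y) (J z) (J w)
        = A (J x) (J y) z w + A x y (J z) (J w) + A (J x) y (J z) w
          + A x (J y) z (J w) + A (J x) y z (J w) + A x (J y) (J z) w) :
    ((∀ x y z : V, A y x x z + A y (J x) (J x) z = 0) → A = 0)
    ∧ ((∀ x z w : V, A x (J x) z w = 0) → A = 0) := by
  have hA : IsAlgebraicCurvatureTensor A := ⟨hAanti, hApair, hAbianchi⟩
  have hflat := hA.eq_zero_of_complexCurvatureOperatorVanishes hJ hGray
  refine ⟨fun hJacobi => hflat ?_, hflat⟩
  have hK := hA.apply_J_J_left_of_complexJacobiVanishes hJ hGray hJacobi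
  exact hA.complexCurvatureOperatorVanishes_of_kaehler hJ hK hJacobi

/-- for a complex model satisfying the Gray identity, vanishing of the
complex Jacobi operator (equivalently, of the complex curvature operator) for every
complex line forces `A = 0`. -/
theorem gray_identity_and_vanishing_complex_operator_implies_flat
    {V : Type*} [NormedAddCommGroup V] [InnerProductSpace ℝ V] [FiniteDimensional ℝ V]
    (J : V →ₗ[ℝ] V) (hJ : ∀ x, J (J x) = -x)
    (hJiso : ∀ x y : V, ⟪J x, J y⟫ = ⟪x, y⟫)
    (A : V →ₗ[ℝ] V →ₗ[ℝ] V →ₗ[ℝ] V →ₗ[ℝ] ℝ)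
    (hAanti : ∀ x y z w : V, A x y z w = - A y x z w)
    (hApair : ∀ x y z w : V, A x y z w = A z w x y)
    (hAbianchi : ∀ x y z w : V, A x y z w + A y z x w + A z x y w = 0)
    (hGray : ∀ x y z w : V,
      A x y z w + A (J x) (J y) (J z) (J w)
        = A (J x) (J y) z w + A x y (J z) (J w) + A (J x) y (J z) w
          + A x (J y) z (J w) + A (J x) y z (J w) + A x (J y) (J z) w) :
    ((∀ x y z : V, A y x x z + A y (J x) (J x) z = 0) → A = 0)
    ∧ ((∀ x z w : V, A x (J x) z w = 0) → A = 0) :=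
  gray_identity_and_vanishing_complex_operator_implies_flat_general J hJ A hAanti hApair hAbianchi
    hGray
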